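/- Define f : ℝ → ℝ by f(x) = 3 − x²/2 for 0 ≤ x ≤ 2 and f(x) = 5 − 2x for 2 ≤ x ≤ 5/2. Then (1/3)·∫₀^{5/2} f(x) dx = 59/36, and 59/36 < 5/3. -/

import Mathlib

open Set intervalIntegral

theorem intervalIntegral_eq_add_of_eqOn_Icc {f g h : ℝ → ℝ} {a b c : ℝ} (hab : a ≤ b)
    (hbc : b ≤ c) (hg : ContinuousOn g (Icc a b)) (hh : ContinuousOn h (Icc b c))
    (hfg : EqOn f g (Icc a b)) (hfh : EqOn f h (Icc b c)) :
    ∫ x in a..c, f x = (∫ x in a..b, g x) + ∫ x in b..c, h x := by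
  rw [← uIcc_of_le hab] at hg hfg
  rw [← uIcc_of_le hbc] at hh hfh
  have hf₁ : IntervalIntegrable f MeasureTheory.volume a b :=
    (hg.congr hfg).intervalIntegrable
  have hf₂ : IntervalIntegrable f MeasureTheory.volume b c :=
    (hh.congr hfh).intervalIntegrable
  rw [← integral_add_adjacent_intervals hf₁ hf₂, integral_congr hfg, integral_congr hfh]

theorem integral_three_sub_sq_div_two : ∫ x in (0 : ℝ)..2, (3 - x ^ 2 / 2) = 14 / 3 := by
  rw [integral_sub intervalIntegrable_const ((by fun_prop : Continuous _).intervalIntegrable _ _),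
    integral_div, integral_pow]
  norm_num

theorem integral_five_sub_two_mul : ∫ x in (2 : ℝ)..5 / 2, (5 - 2 * x) = 1 / 4 := by
  rw [integral_sub intervalIntegrable_const ((by fun_prop : Continuous _).intervalIntegrable _ _),
    integral_const_mul, integral_id]
  norm_num

theorem stmt_9 (f : ℝ → ℝ)
    (h1 : ∀ x : ℝ, 0 ≤ x → x ≤ 2 → f x = 3 - x^2/2)
    (h2 : ∀ x : ℝ, 2 ≤ x → x ≤ 5/2 → f x = 5 - 2*x) :
    (1/3 : ℝ) * ∫ x in (0:ℝ)..(5/2), f x = 59/36 ∧ (59/36 : ℝ) < 5/3 := by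
  have hsplit := intervalIntegral_eq_add_of_eqOn_Icc (f := f) (by norm_num) (by norm_num)
    (by fun_prop) (by fun_prop) (fun x hx => h1 x hx.1 hx.2) (fun x hx => h2 x hx.1 hx.2)
  rw [hsplit, integral_three_sub_sq_div_two, integral_five_sub_two_mul]
  norm_num
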